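/- Fix real numbers κ, λ, ρ, ν, θ, r, x with r ≥ 0 and θ ≥ r. The set A = {(a, b) : a = (κ²/2)E + (m λ² x²/2)·R(ρ), b = (ν, 0)ᵀ + (l x (θ - r) + r x)·(ρ, 1)ᵀ, 0 ≤ m ≤ 1, 0 ≤ l ≤ √m} is convex, where E is the 2×2 matrix with E₁₁ = 1 and all other entries 0, and R(ρ) is the matrix with rows (ρ², ρ) and (ρ, 1). -/
import Mathlib

theorem extended_control_set_convex
    (kap lam rho nu th r x : ℝ) (hr : 0 ≤ r) (hθ : r ≤ th) :
    Convex ℝ {q : Matrix (Fin 2) (Fin 2) ℝ × (Fin 2 → ℝ) | ∃ m l : ℝ,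
      0 ≤ m ∧ m ≤ 1 ∧ 0 ≤ l ∧ l ≤ Real.sqrt m ∧
      q.1 = (kap ^ 2 / 2) • !![1, 0; 0, 0]
              + (m * lam ^ 2 * x ^ 2 / 2) • !![rho ^ 2, rho; rho, 1] ∧
      q.2 = ![nu, 0] + (l * x * (th - r) + r * x) • ![rho, 1]} := by
  rintro ⟨p1, p2⟩ ⟨m1, l1, hm1, hm1', hl1, hls1, ha1, hb1⟩
    ⟨q1, q2⟩ ⟨m2, l2, hm2, hm2', hl2, hls2, ha2, hb2⟩ s t hs ht hst
  refine ⟨s * m1 + t * m2, s * l1 + t * l2, ?_, ?_, ?_, ?_, ?_, ?_⟩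
  · positivity
  · calc s * m1 + t * m2 ≤ s * 1 + t * 1 := by
          gcongr
        _ = 1 := by linarith
  · positivity
  · calc s * l1 + t * l2 ≤ s * Real.sqrt m1 + t * Real.sqrt m2 := by gcongr
      _ ≤ Real.sqrt (s * m1 + t * m2) :=
        Real.strictConcaveOn_sqrt.concaveOn.2 hm1 hm2 hs ht hst
  · have h : t = 1 - s := by linarith
    subst h
    simp only [Prod.smul_fst, Prod.fst_add, smul_add] at *
    rw [ha1, ha2]
    module
  · have h : t = 1 - s := by linarith
    subst h
    simp only [Prod.smul_snd, Prod.snd_add, smul_add] at *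
    rw [hb1, hb2]
    module
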